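/- If a finite group G has odd order n > 1, or more generally has no subgroup of index 2, then the Cayley table of G has no maximal partial transversal of any length ℓ with n/2 ≤ ℓ < (3/5)n; in particular, for odd n > 5, the Cayley table of G has no maximal partial transversal of length (n+1)/2. -/

import Mathlib

/-- The Cayley table of a group `G` as a set of triples `(g, h, g*h)`. -/
def cayleyTable (G : Type*) [Group G] [Fintype G] [DecidableEq G] :
    Finset (G × G × G) :=
  Finset.univ.image (fun p : G × G => (p.1, p.2, p.1 * p.2))

/-- A partial transversal: a subset of the triples with pairwise distinct
rows, columns and symbols. -/
def IsPartialTransversal {α β γ : Type*} (L T : Finset (α × β × γ)) : Prop :=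
  T ⊆ L ∧ ∀ t ∈ T, ∀ t' ∈ T, t ≠ t' →
    t.1 ≠ t'.1 ∧ t.2.1 ≠ t'.2.1 ∧ t.2.2 ≠ t'.2.2

/-- A maximal partial transversal. -/
def IsMaximalPartialTransversal {α β γ : Type*} (L T : Finset (α × β × γ)) : Prop :=
  IsPartialTransversal L T ∧
    ∀ T' : Finset (α × β × γ), IsPartialTransversal L T' → T ⊆ T' → T' = T

/-!
Let `A` and `B` be the rows and columns missed by a maximal partial transversal `T` of length `ℓ`.
Then `#A = #B = n - ℓ`, and maximality forces `A * B` into the `ℓ` symbols of `T`. Because `A * B`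
is so small, the elements with more than `#B / 2` representations `b * b'⁻¹` form a subgroup:
two of them multiply into `B * B⁻¹`, which lies in `A⁻¹ * A`, all of whose elements are popular.
This subgroup contains a translate of `A`, so its index is at most `2`; it is proper because the
numbers of representations sum to `#B ^ 2 ≤ n * #B / 2`.
-/

open Finset
open scoped Pointwise

namespace Finset

variable {G : Type*} [Group G] [DecidableEq G]

lemma sum_convolution [Fintype G] (A B : Finset G) : ∑ x, A.convolution B x = #A * #B := by
  rw [← card_product]
  exact (card_eq_sum_card_fiberwise fun _ _ => mem_coe.2 (mem_univ _)).symm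

lemma convolution_inv_inv (B : Finset G) (x : G) :
    B.convolution B⁻¹ x⁻¹ = B.convolution B⁻¹ x := by
  rw [convolution_inv, inv_inv]

/-- The `x` with more than `#B / 2` representations `x = b * b'⁻¹`, `b, b' ∈ B`. -/
def popularQuotients (B : Finset G) : Set G := {x | #B < 2 * B.convolution B⁻¹ x}

lemma mem_popularQuotients {B : Finset G} {x : G} :
    x ∈ B.popularQuotients ↔ #B < 2 * B.convolution B⁻¹ x := Iff.rfl

lemma inv_mem_popularQuotients {B : Finset G} {x : G} (hx : x ∈ B.popularQuotients) :
    x⁻¹ ∈ B.popularQuotients := by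
  rwa [mem_popularQuotients, convolution_inv_inv]

lemma exists_mul_eq_mul_inv_of_mem_popularQuotients {B : Finset G} {x y : G}
    (hx : x ∈ B.popularQuotients) (hy : y ∈ B.popularQuotients) :
    ∃ b ∈ B, ∃ b' ∈ B, x * y = b' * b⁻¹ := by
  have hx' := inv_mem_popularQuotients hx
  rw [mem_popularQuotients, ← card_inter_smul] at hx' hy
  obtain ⟨z, hz⟩ := inter_nonempty_of_card_lt_card_add_card (inter_subset_left (s₂ := x⁻¹ • B))
    inter_subset_left (by omega : #B < _ + #(B ∩ y • B))
  simp only [mem_inter, mem_smul_finset, smul_eq_mul] at hz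
  obtain ⟨⟨-, b', hb', rfl⟩, -, b, hb, hb'b⟩ := hz
  exact ⟨b, hb, b', hb', by rw [eq_mul_inv_iff_mul_eq, mul_assoc, hb'b, mul_inv_cancel_left]⟩

lemma exists_mul_inv_eq_inv_mul {A B : Finset G} (h : #(A * B) < 2 * #A) {b b' : G}
    (hb : b ∈ B) (hb' : b' ∈ B) : ∃ a ∈ A, ∃ a' ∈ A, b' * b⁻¹ = a'⁻¹ * a := by
  obtain ⟨z, hz⟩ := inter_nonempty_of_card_lt_card_add_card
    (op_smul_finset_subset_mul (s := A) hb) (op_smul_finset_subset_mul (s := A) hb')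
    (by rwa [card_smul_finset, card_smul_finset, ← two_mul])
  simp only [mem_inter, mem_smul_finset, op_smul_eq_mul] at hz
  obtain ⟨⟨a, ha, rfl⟩, a', ha', haa'⟩ := hz
  exact ⟨a, ha, a', ha', by rw [eq_inv_mul_iff_mul_eq, ← mul_assoc, haa', mul_inv_cancel_right]⟩

lemma inv_mul_mem_popularQuotients {A B : Finset G} (h : 2 * #(A * B) < 3 * #B) {a a' : G}
    (ha : a ∈ A) (ha' : a' ∈ A) : a⁻¹ * a' ∈ B.popularQuotients := by
  have hunion : #(a • B ∪ a' • B) ≤ #(A * B) :=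
    card_le_card (union_subset (smul_finset_subset_mul ha) (smul_finset_subset_mul ha'))
  have := card_union_add_card_inter (a • B) (a' • B)
  rw [card_smul_finset, card_smul_finset, card_smul_inter_smul] at this
  rw [mem_popularQuotients]
  omega

lemma exists_notMem_popularQuotients [Fintype G] {B : Finset G}
    (hB : 2 * #B ≤ Fintype.card G) : ∃ x, x ∉ B.popularQuotients := by
  by_contra! hall
  have hlt := sum_lt_sum_of_nonempty univ_nonempty fun x (_ : x ∈ univ) =>
    mem_popularQuotients.1 (hall x)
  rw [sum_const, card_univ, smul_eq_mul, ← mul_sum, sum_convolution, card_inv] at hlt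
  nlinarith

theorem exists_index_two_of_card_mul_lt [Fintype G] {A B : Finset G}
    (h₁ : #(A * B) < 2 * #A) (h₂ : 2 * #(A * B) < 3 * #B)
    (hA : Fintype.card G < 3 * #A) (hB : 2 * #B ≤ Fintype.card G) :
    ∃ H : Subgroup G, H.index = 2 := by
  obtain ⟨a₀, ha₀⟩ : A.Nonempty := card_pos.1 (by omega)
  let H := Subgroup.ofDiv B.popularQuotients ⟨_, inv_mul_mem_popularQuotients h₂ ha₀ ha₀⟩
    fun x hx y hy => by
      obtain ⟨b, hb, b', hb', hxy⟩ :=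
        exists_mul_eq_mul_inv_of_mem_popularQuotients hx (inv_mem_popularQuotients hy)
      obtain ⟨a, ha, a', ha', hbb'⟩ := exists_mul_inv_eq_inv_mul h₁ hb hb'
      rw [hxy, hbb']
      exact inv_mul_mem_popularQuotients h₂ ha' ha
  have hAH : #A ≤ Nat.card H := by
    calc #A = Nat.card (a₀⁻¹ • A : Finset G) := by rw [Nat.card_eq_finsetCard, card_smul_finset]
      _ ≤ Nat.card H := Nat.card_mono (Set.toFinite _) ?_
    intro z hz
    obtain ⟨a, ha, rfl⟩ := mem_smul_finset.1 hz
    exact inv_mul_mem_popularQuotients h₂ ha₀ ha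
  have hH : H ≠ ⊤ := by
    obtain ⟨x, hx⟩ := exists_notMem_popularQuotients hB
    exact fun htop => hx (htop ▸ Subgroup.mem_top x : x ∈ H)
  have hcard : H.index * Nat.card H = Fintype.card G := by
    rw [H.index_mul_card, Nat.card_eq_fintype_card]
  have h3 : H.index < 3 := by
    by_contra! h3
    nlinarith
  have h0 : H.index ≠ 0 := H.index_ne_zero_of_finite
  have h1 : H.index ≠ 1 := mt Subgroup.index_eq_one.1 hH
  exact ⟨H, by omega⟩

end Finset

section Transversal

variable {α β γ : Type*}

def rows [DecidableEq α] (T : Finset (α × β × γ)) : Finset α := T.image Prod.fst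

def cols [DecidableEq β] (T : Finset (α × β × γ)) : Finset β := T.image fun t => t.2.1

def symbols [DecidableEq γ] (T : Finset (α × β × γ)) : Finset γ := T.image fun t => t.2.2

variable {L T : Finset (α × β × γ)}

namespace IsPartialTransversal

lemma card_rows [DecidableEq α] (hT : IsPartialTransversal L T) : #(rows T) = #T :=
  card_image_of_injOn fun t ht t' ht' h => by_contra fun hne => (hT.2 t ht t' ht' hne).1 h

lemma card_cols [DecidableEq β] (hT : IsPartialTransversal L T) : #(cols T) = #T :=
  card_image_of_injOn fun t ht t' ht' h => by_contra fun hne => (hT.2 t ht t' ht' hne).2.1 h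

lemma card_symbols [DecidableEq γ] (hT : IsPartialTransversal L T) : #(symbols T) = #T :=
  card_image_of_injOn fun t ht t' ht' h => by_contra fun hne => (hT.2 t ht t' ht' hne).2.2 h

lemma insert [DecidableEq α] [DecidableEq β] [DecidableEq γ] (hT : IsPartialTransversal L T)
    {t : α × β × γ} (ht : t ∈ L) (h₁ : t.1 ∉ rows T) (h₂ : t.2.1 ∉ cols T)
    (h₃ : t.2.2 ∉ symbols T) :
    IsPartialTransversal L (insert t T) := by
  have hnew : ∀ s ∈ T, t.1 ≠ s.1 ∧ t.2.1 ≠ s.2.1 ∧ t.2.2 ≠ s.2.2 := fun s hs =>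
    ⟨fun e => h₁ (mem_image.2 ⟨s, hs, e.symm⟩), fun e => h₂ (mem_image.2 ⟨s, hs, e.symm⟩),
      fun e => h₃ (mem_image.2 ⟨s, hs, e.symm⟩)⟩
  refine ⟨insert_subset ht hT.1, fun s hs s' hs' hne => ?_⟩
  rcases mem_insert.1 hs with rfl | hsT <;> rcases mem_insert.1 hs' with rfl | hs'T
  · exact absurd rfl hne
  · exact hnew s' hs'T
  · exact (hnew s hsT).imp Ne.symm (And.imp Ne.symm Ne.symm)
  · exact hT.2 s hsT s' hs'T hne

end IsPartialTransversal

lemma IsMaximalPartialTransversal.mem_rows_or_mem_cols_or_mem_symbols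
    [DecidableEq α] [DecidableEq β] [DecidableEq γ] {t : α × β × γ}
    (hT : IsMaximalPartialTransversal L T) (ht : t ∈ L) :
    t.1 ∈ rows T ∨ t.2.1 ∈ cols T ∨ t.2.2 ∈ symbols T := by
  by_contra! h
  have htT : t ∈ T :=
    hT.2 _ (hT.1.insert ht h.1 h.2.1 h.2.2) (subset_insert _ _) ▸ mem_insert_self t T
  exact h.1 (mem_image_of_mem _ htT)

end Transversal

lemma IsMaximalPartialTransversal.compl_rows_mul_compl_cols_subset {G : Type*} [Group G]
    [Fintype G] [DecidableEq G] {T : Finset (G × G × G)}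
    (hT : IsMaximalPartialTransversal (cayleyTable G) T) :
    (rows T)ᶜ * (cols T)ᶜ ⊆ symbols T := by
  refine mul_subset_iff.2 fun a ha b hb => ?_
  have := hT.mem_rows_or_mem_cols_or_mem_symbols (t := (a, b, a * b))
    (mem_image_of_mem _ (mem_univ (a, b)))
  exact (this.resolve_left (mem_compl.1 ha)).resolve_left (mem_compl.1 hb)

theorem stmt16 {G : Type*} [Group G] [Fintype G] [DecidableEq G]
    (h : ¬ ∃ H : Subgroup G, H.index = 2) :
    (∀ T : Finset (G × G × G), IsMaximalPartialTransversal (cayleyTable G) T →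
        Fintype.card G ≤ 2 * T.card → 5 * T.card < 3 * Fintype.card G → False) ∧
      (Odd (Fintype.card G) → 5 < Fintype.card G →
        ¬ ∃ T : Finset (G × G × G), IsMaximalPartialTransversal (cayleyTable G) T ∧
          2 * T.card = Fintype.card G + 1) := by
  have short_length : ∀ T : Finset (G × G × G), IsMaximalPartialTransversal (cayleyTable G) T →
      Fintype.card G ≤ 2 * #T → 5 * #T < 3 * Fintype.card G → False := by
    intro T hT h₂ h₅
    have hTG : #T ≤ Fintype.card G := hT.1.card_rows ▸ card_le_univ _
    have hA : #(rows T)ᶜ = Fintype.card G - #T := by rw [card_compl, hT.1.card_rows]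
    have hB : #(cols T)ᶜ = Fintype.card G - #T := by rw [card_compl, hT.1.card_cols]
    have hAB : #((rows T)ᶜ * (cols T)ᶜ) ≤ #T :=
      hT.1.card_symbols ▸ card_le_card hT.compl_rows_mul_compl_cols_subset
    exact h (exists_index_two_of_card_mul_lt (A := (rows T)ᶜ) (B := (cols T)ᶜ)
      (by omega) (by omega) (by omega) (by omega))
  exact ⟨short_length, fun _ _ ⟨T, hT, hT'⟩ => short_length T hT (by omega) (by omega)⟩
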